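/- Let L ≥ 1 be a positive integer, let I, T, N, λ1 be positive reals, let σ_{y1},…,σ_{yL} be positive reals with Λhalf = diag(σ_{y1},…,σ_{yL}), and let λ2, λ3, τ2, τ3, C1, C2 be reals with λ2 − τ2 ≠ 0, λ3 − τ3 ≠ 0, λ2 + (L−1)τ2 ≠ 0, λ3 + (L−1)τ3 ≠ 0, and C1(λ3 + (L−1)τ3) − C2(λ2 + (L−1)τ2) ≠ 0. Let ω ∈ ℝ^L be the vector with entries ω_l = σ_{yl}·λ1^{1/2}. Then (I·T/N)·[C1·ω^⊤·Λhalf^{-1}·((λ2 − τ2)·I_L + τ2·J_L)^{-1}·Λhalf^{-1}·ω − C2·ω^⊤·Λhalf^{-1}·((λ3 − τ3)·I_L + τ3·J_L)^{-1}·Λhalf^{-1}·ω]^{-1} = (I·T/(L·N·λ1))·(λ2 + (L−1)τ2)·(λ3 + (L−1)τ3) / [C1(λ3 + (L−1)τ3) − C2(λ2 + (L−1)τ2)]. -/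

import Mathlib

open Matrix

/-!
`(diagonal σ)⁻¹ *ᵥ ω` is the constant vector `√λ₁`, and constant vectors are eigenvectors of
`a • 1 + τ • allOnes L` with eigenvalue `a + L τ`. Hence each quadratic form in the variance
equals `L λ₁ / (a + L τ)` whatever the `σ l`, and the closed form is field arithmetic.
-/

def allOnes (u : ℕ) : Matrix (Fin u) (Fin u) ℝ := Matrix.of fun _ _ => 1

lemma allOnes_mul_allOnes (L : ℕ) : allOnes L * allOnes L = (L : ℝ) • allOnes L := by
  ext i j
  simp [allOnes, mul_apply]

lemma allOnes_mulVec_const (L : ℕ) (c : ℝ) :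
    allOnes L *ᵥ (fun _ => c) = fun _ => (L : ℝ) * c := by
  ext i
  simp [allOnes, mulVec, dotProduct]

lemma inv_smul_one_add_smul_allOnes (L : ℕ) {a τ : ℝ} (ha : a ≠ 0) (hb : a + L * τ ≠ 0) :
    (a • (1 : Matrix (Fin L) (Fin L) ℝ) + τ • allOnes L)⁻¹ =
      a⁻¹ • (1 : Matrix (Fin L) (Fin L) ℝ) - (τ / (a * (a + L * τ))) • allOnes L := by
  refine inv_eq_right_inv ?_
  simp only [add_mul, mul_sub, smul_mul_smul_comm, Matrix.mul_one, Matrix.one_mul,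
    allOnes_mul_allOnes, smul_smul]
  have hb' : a + τ * L ≠ 0 := by rwa [mul_comm]
  match_scalars
  · field_simp
  · field_simp
    ring

lemma inv_smul_one_add_smul_allOnes_mulVec_const (L : ℕ) {a τ : ℝ} (ha : a ≠ 0)
    (hb : a + L * τ ≠ 0) (c : ℝ) :
    (a • (1 : Matrix (Fin L) (Fin L) ℝ) + τ • allOnes L)⁻¹ *ᵥ (fun _ => c) =
      fun _ => c / (a + L * τ) := by
  rw [inv_smul_one_add_smul_allOnes L ha hb, sub_mulVec, smul_mulVec, smul_mulVec,
    one_mulVec, allOnes_mulVec_const]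
  ext i
  simp only [Pi.sub_apply, Pi.smul_apply, smul_eq_mul]
  have hb' : a + τ * L ≠ 0 := by rwa [mul_comm]
  field_simp
  ring

lemma diagonal_inv_mulVec_mul_const {n K : Type*} [Fintype n] [DecidableEq n] [Field K]
    {σ : n → K} (hσ : ∀ l, σ l ≠ 0) (s : K) :
    (diagonal σ)⁻¹ *ᵥ (fun l => σ l * s) = fun _ => s := by
  have : (diagonal σ)⁻¹ = diagonal σ⁻¹ :=
    inv_eq_right_inv <| by
      rw [diagonal_mul_diagonal, ← diagonal_one]
      exact congrArg diagonal (funext fun l => mul_inv_cancel₀ (hσ l))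
  ext l
  rw [this, mulVec_diagonal, Pi.inv_apply, ← mul_assoc, inv_mul_cancel₀ (hσ l), one_mul]

lemma dotProduct_mul_mul_mulVec_of_transpose_eq {n R : Type*} [Fintype n] [CommSemiring R]
    {B : Matrix n n R} (hB : Bᵀ = B) (A : Matrix n n R) (v : n → R) :
    v ⬝ᵥ ((B * A * B) *ᵥ v) = (B *ᵥ v) ⬝ᵥ (A *ᵥ (B *ᵥ v)) := by
  have hvB : v ᵥ* B = B *ᵥ v := by rw [← vecMul_transpose, hB]
  rw [← mulVec_mulVec, ← mulVec_mulVec, dotProduct_mulVec v B, hvB]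

lemma weighted_quadForm_inv_smul_one_add_smul_allOnes (L : ℕ) {σ : Fin L → ℝ}
    (hσ : ∀ l, σ l ≠ 0) {a τ : ℝ} (ha : a ≠ 0) (hb : a + L * τ ≠ 0) (s : ℝ) :
    (fun l => σ l * s) ⬝ᵥ (((diagonal σ)⁻¹ * (a • (1 : Matrix (Fin L) (Fin L) ℝ) +
        τ • allOnes L)⁻¹ * (diagonal σ)⁻¹) *ᵥ fun l => σ l * s) = L * (s * s) / (a + L * τ) := by
  have hsymm : ((diagonal σ)⁻¹)ᵀ = (diagonal σ)⁻¹ := by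
    rw [transpose_nonsing_inv, diagonal_transpose]
  rw [dotProduct_mul_mul_mulVec_of_transpose_eq hsymm, diagonal_inv_mulVec_mul_const hσ,
    inv_smul_one_add_smul_allOnes_mulVec_const L ha hb]
  simp only [dotProduct, Finset.sum_const, Finset.card_univ, Fintype.card_fin, nsmul_eq_mul]
  rw [← mul_div_assoc, ← mul_div_assoc]

theorem common_effect_variance_closed_form_general
    (L : ℕ) (I T N lam1 : ℝ)
    (hlam1 : 0 < lam1)
    (σ : Fin L → ℝ) (hσ : ∀ l, 0 < σ l)
    (lam2 lam3 tau2 tau3 C1 C2 : ℝ)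
    (h1 : lam2 - tau2 ≠ 0) (h2 : lam3 - tau3 ≠ 0)
    (h3 : lam2 + ((L : ℝ) - 1) * tau2 ≠ 0) (h4 : lam3 + ((L : ℝ) - 1) * tau3 ≠ 0)
    (ω : Fin L → ℝ) (hω : ∀ l, ω l = σ l * Real.sqrt lam1) :
    (I * T / N) *
      (C1 * (ω ⬝ᵥ (((Matrix.diagonal σ)⁻¹ *
              ((lam2 - tau2) • (1 : Matrix (Fin L) (Fin L) ℝ) + tau2 • allOnes L)⁻¹ *
              (Matrix.diagonal σ)⁻¹) *ᵥ ω)) -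
       C2 * (ω ⬝ᵥ (((Matrix.diagonal σ)⁻¹ *
              ((lam3 - tau3) • (1 : Matrix (Fin L) (Fin L) ℝ) + tau3 • allOnes L)⁻¹ *
              (Matrix.diagonal σ)⁻¹) *ᵥ ω)))⁻¹ =
    I * T / ((L : ℝ) * N * lam1) *
      (lam2 + ((L : ℝ) - 1) * tau2) * (lam3 + ((L : ℝ) - 1) * tau3) /
      (C1 * (lam3 + ((L : ℝ) - 1) * tau3) - C2 * (lam2 + ((L : ℝ) - 1) * tau2)) := by
  have hD {lam tau : ℝ} : lam - tau + L * tau = lam + ((L : ℝ) - 1) * tau := by ring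
  have hσ₀ (l : Fin L) : σ l ≠ 0 := (hσ l).ne'
  rw [funext hω, weighted_quadForm_inv_smul_one_add_smul_allOnes L hσ₀ h1 (hD ▸ h3),
    weighted_quadForm_inv_smul_one_add_smul_allOnes L hσ₀ h2 (hD ▸ h4), hD, hD,
    Real.mul_self_sqrt hlam1.le]
  generalize lam2 + ((L : ℝ) - 1) * tau2 = D2 at h3 ⊢
  generalize lam3 + ((L : ℝ) - 1) * tau3 = D3 at h4 ⊢
  have hcombine : C1 * (L * lam1 / D2) - C2 * (L * lam1 / D3) =
      L * lam1 * (C1 * D3 - C2 * D2) / (D2 * D3) := by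
    field_simp
  rw [hcombine, inv_div]
  generalize C1 * D3 - C2 * D2 = E
  ring

/-- under common ICC values across endpoints, the general variance expression
for the common intervention effect estimator simplifies to the closed form of equation (10). -/
theorem common_effect_variance_closed_form
    (L : ℕ) (hL : 1 ≤ L) (I T N lam1 : ℝ)
    (hI : 0 < I) (hT : 0 < T) (hN : 0 < N) (hlam1 : 0 < lam1)
    (σ : Fin L → ℝ) (hσ : ∀ l, 0 < σ l)
    (lam2 lam3 tau2 tau3 C1 C2 : ℝ)
    (h1 : lam2 - tau2 ≠ 0) (h2 : lam3 - tau3 ≠ 0)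
    (h3 : lam2 + ((L : ℝ) - 1) * tau2 ≠ 0) (h4 : lam3 + ((L : ℝ) - 1) * tau3 ≠ 0)
    (h5 : C1 * (lam3 + ((L : ℝ) - 1) * tau3) - C2 * (lam2 + ((L : ℝ) - 1) * tau2) ≠ 0)
    (ω : Fin L → ℝ) (hω : ∀ l, ω l = σ l * Real.sqrt lam1) :
    (I * T / N) *
      (C1 * (ω ⬝ᵥ (((Matrix.diagonal σ)⁻¹ *
              ((lam2 - tau2) • (1 : Matrix (Fin L) (Fin L) ℝ) + tau2 • allOnes L)⁻¹ *
              (Matrix.diagonal σ)⁻¹) *ᵥ ω)) -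
       C2 * (ω ⬝ᵥ (((Matrix.diagonal σ)⁻¹ *
              ((lam3 - tau3) • (1 : Matrix (Fin L) (Fin L) ℝ) + tau3 • allOnes L)⁻¹ *
              (Matrix.diagonal σ)⁻¹) *ᵥ ω)))⁻¹ =
    I * T / ((L : ℝ) * N * lam1) *
      (lam2 + ((L : ℝ) - 1) * tau2) * (lam3 + ((L : ℝ) - 1) * tau3) /
      (C1 * (lam3 + ((L : ℝ) - 1) * tau3) - C2 * (lam2 + ((L : ℝ) - 1) * tau2)) :=
  common_effect_variance_closed_form_general L I T N lam1 hlam1 σ hσ lam2 lam3 tau2 tau3 C1 C2 h1 h2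
    h3 h4 ω hω
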